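/- If dynA* is run with the reeval flag enabled and a dyn-monotonic and dyn-consistent dynamic heuristic, then dynA* is OPTEX: every state s that is expanded has, at the time of its expansion, a stored g-value equal to g*(s), the cost of an optimal path from s_I to s. -/

import Mathlib

open scoped ENNReal Classical

/-! ## Transition systems -/

/-- A labeled transition: (origin, label, target). -/
abbrev Tran (S L : Type) := S × L × S

/-- A transition system with states `S`, labels `L`, a cost function,
a set of labeled transitions, an initial state and a set of goal states. -/
structure TransSys (S L : Type) where
  cost : L → NNReal
  trans : Set (Tran S L)
  init : S
  goal : Set S

namespace TransSys

variable {S L : Type}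

/-- `IsPathFrom ts s π s'`: `π` is a path from `s` to `s'` in `ts`. -/
inductive IsPathFrom (ts : TransSys S L) : S → List (Tran S L) → S → Prop
  | nil (s : S) : IsPathFrom ts s [] s
  | cons {s m e : S} {l : L} {π : List (Tran S L)} :
      (s, l, m) ∈ ts.trans → IsPathFrom ts m π e → IsPathFrom ts s ((s, l, m) :: π) e

/-- The cost of a path: sum of the costs of its labels. -/
def pathCost (ts : TransSys S L) (π : List (Tran S L)) : NNReal :=
  (π.map fun t => ts.cost t.2.1).sum

/-- A state is reachable if there is a path from the initial state to it. -/
def Reachable (ts : TransSys S L) (s : S) : Prop := ∃ π, ts.IsPathFrom ts.init π s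

/-- A solution is a path from the initial state to a goal state. -/
def Solution (ts : TransSys S L) (π : List (Tran S L)) : Prop :=
  ∃ s ∈ ts.goal, ts.IsPathFrom ts.init π s

def Solvable (ts : TransSys S L) : Prop := ∃ π, ts.Solution π

/-- `h*`: minimal cost of a path from `s` to a goal state (`∞` if none exists). -/
noncomputable def hstar (ts : TransSys S L) (s : S) : ℝ≥0∞ :=
  sInf {x : ℝ≥0∞ | ∃ π, ∃ g ∈ ts.goal, ts.IsPathFrom s π g ∧ x = (ts.pathCost π : ℝ≥0∞)}

/-- `g*`: minimal cost of a path from the initial state to `s` (`∞` if none exists). -/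
noncomputable def gstar (ts : TransSys S L) (s : S) : ℝ≥0∞ :=
  sInf {x : ℝ≥0∞ | ∃ π, ts.IsPathFrom ts.init π s ∧ x = (ts.pathCost π : ℝ≥0∞)}

end TransSys

/-! ## Information sources and dynamic heuristics -/

/-- An information source for a transition system (Definition 1). -/
structure InfoSource {S L : Type} (ts : TransSys S L) (I : Type) where
  initInfo : I
  update : I → Tran S L → I
  refine : I → S → I

namespace InfoSource

variable {S L I : Type} {ts : TransSys S L}

/-- `ReachWith σ i K`: information object `i` is obtained from the initial
information by updates/refinements, where `K` is the set consisting of the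
initial state together with all targets of used transitions, every refined state
lies in `K`, and the origin of every used transition lies in `K` (Definition 2). -/
inductive ReachWith (σ : InfoSource ts I) : I → Set S → Prop
  | base : ReachWith σ σ.initInfo {ts.init}
  | update {i : I} {K : Set S} {t : Tran S L} :
      ReachWith σ i K → t ∈ ts.trans → t.1 ∈ K →
      ReachWith σ (σ.update i t) (insert t.2.2 K)
  | refine {i : I} {K : Set S} {s : S} :
      ReachWith σ i K → s ∈ K → ReachWith σ (σ.refine i s) K

/-- An information object is reachable (Definition 2). -/
def ReachableInfo (σ : InfoSource ts I) (i : I) : Prop := ∃ K, σ.ReachWith i K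

end InfoSource

section HeuristicProps

variable {S L I : Type} (ts : TransSys S L) (σ : InfoSource ts I) (h : S → I → ℝ≥0∞)

def DynSafe : Prop := ∀ (s : S) (i : I), σ.ReachableInfo i → h s i = ⊤ → ts.hstar s = ⊤

def DynAdmissible : Prop := ∀ (s : S) (i : I), σ.ReachableInfo i → h s i ≤ ts.hstar s

def DynConsistent : Prop :=
  ∀ t ∈ ts.trans, ∀ i : I, σ.ReachableInfo i →
    h t.1 i ≤ (ts.cost t.2.1 : ℝ≥0∞) + h t.2.2 i

def DynGoalAware : Prop := ∀ s ∈ ts.goal, ∀ i : I, σ.ReachableInfo i → h s i = 0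

def DynMonotonic : Prop :=
  ∀ i : I, σ.ReachableInfo i →
    (∀ s : S, ∀ t ∈ ts.trans, h s i ≤ h s (σ.update i t)) ∧
    (∀ s s' : S, h s i ≤ h s (σ.refine i s'))

end HeuristicProps

/-! ## Progression sources -/

/-- A progression source (Definition 5). -/
structure ProgSource {S L : Type} (ts : TransSys S L) (J : Type) where
  initJ : J
  progress : J → Tran S L → J
  merge : J → J → J

/-- The progression-based information source built on a progression source
(Definition 7): per-state information, updated by progressing along a
transition and merging with existing information at the target. -/
noncomputable def progInfoSource {S L J : Type} (ts : TransSys S L) (p : ProgSource ts J) :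
    InfoSource ts (S → Option J) where
  initInfo := fun x => if x = ts.init then some p.initJ else none
  update := fun i t => fun x =>
    if x = t.2.2 then
      match i t.1 with
      | none => i t.2.2
      | some j =>
        match i t.2.2 with
        | none => some (p.progress j t)
        | some j' => some (p.merge (p.progress j t) j')
    else i x
  refine := fun i _ => i

/-- The parent source (Definition 6): per-state `g`-values and parent pointers. -/
noncomputable def parentSource {S L : Type} (ts : TransSys S L) :
    ProgSource ts (NNReal × Option (Tran S L)) where
  initJ := (0, none)
  progress := fun j t => (j.1 + ts.cost t.2.1, some t)
  merge := fun a b => if a.1 ≤ b.1 then a else b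

/-- `ParentChain par s π`: `π` is the sequence of transitions obtained by
following parent pointers backwards from `s` until a state whose stored
pointer is `⊥` (read forwards). -/
inductive ParentChain {S L : Type} (par : S → Option (NNReal × Option (Tran S L))) :
    S → List (Tran S L) → Prop
  | nil {s : S} {g : NNReal} : par s = some (g, none) → ParentChain par s []
  | cons {g : NNReal} {t : Tran S L} {π : List (Tran S L)} :
      par t.2.2 = some (g, some t) → ParentChain par t.1 π →
      ParentChain par t.2.2 (π ++ [t])

/-! ## The dynamic heuristic search framework (Algorithm 1) -/

/-- A configuration of the framework: the known states and one information
object per information source. -/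
structure FConfig (S : Type) {ι : Type} (I : ι → Type) where
  known : Set S
  infos : ∀ k, I k

/-- The (non-terminating) operations of the framework. -/
inductive FOp where
  | genUnknown
  | genKnown
  | refineOp
deriving DecidableEq

section Framework

variable {S L ι : Type} {I : ι → Type} (ts : TransSys S L) (σ : ∀ k, InfoSource ts (I k))

/-- One step of the framework, labeled by the operation performed. -/
inductive FStep : FConfig S I → FOp → FConfig S I → Prop
  | genUnknown {c : FConfig S I} {t : Tran S L} :
      t ∈ ts.trans → t.1 ∈ c.known → t.2.2 ∉ c.known →
      FStep c .genUnknown ⟨insert t.2.2 c.known, fun k => (σ k).update (c.infos k) t⟩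
  | genKnown {c : FConfig S I} {t : Tran S L} :
      t ∈ ts.trans → t.1 ∈ c.known → t.2.2 ∈ c.known →
      FStep c .genKnown ⟨c.known, fun k => (σ k).update (c.infos k) t⟩
  | refineStep {c : FConfig S I} {s : S} :
      s ∈ c.known →
      FStep c .refineOp ⟨c.known, fun k => (σ k).refine (c.infos k) s⟩

/-- The initial configuration of the framework. -/
def initFConfig : FConfig S I := ⟨{ts.init}, fun k => (σ k).initInfo⟩

/-- A configuration occurring in some finite execution of the framework. -/
def FReach (c : FConfig S I) : Prop :=
  Relation.ReflTransGen (fun a b => ∃ op, FStep ts σ a op b) (initFConfig ts σ) c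

/-- Applicability of the gen-unknown operation. -/
def GenUnknownApp (c : FConfig S I) : Prop :=
  ∃ t ∈ ts.trans, t.1 ∈ c.known ∧ t.2.2 ∉ c.known

/-- Applicability of decl-solvable: a goal state is known. -/
def DeclSolvableApp (c : FConfig S I) : Prop := ∃ s ∈ c.known, s ∈ ts.goal

/-- Applicability of decl-unsolvable: no goal state is known and
no transition leaves the known states. -/
def DeclUnsolvableApp (c : FConfig S I) : Prop :=
  (∀ s ∈ c.known, s ∉ ts.goal) ∧ ¬ GenUnknownApp ts c

end Framework

/-! ## dynA* (Algorithm 2) -/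

/-- An open-list entry: (state, g-entry, h-entry). -/
abbrev Entry (S : Type) := S × NNReal × ℝ≥0∞

/-- The f-value of an open-list entry. -/
noncomputable def fval {S : Type} (en : Entry S) : ℝ≥0∞ := (en.2.1 : ℝ≥0∞) + en.2.2

/-- A configuration of dynA*: known states, closed set, open queue, the parent
information (g-values and parent pointers, i.e. the information of σ_p) and the
information object of the heuristic's source σ_h. -/
structure AConfig (S L I : Type) where
  known : Set S
  closed : Set S
  openq : Multiset (Entry S)
  par : S → Option (NNReal × Option (Tran S L))
  info : I

/-- The g-value currently stored for a state. -/
noncomputable def gOf {S L I : Type} (c : AConfig S L I) (s : S) : NNReal :=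
  ((c.par s).map Prod.fst).getD 0

section DynAStar

variable {S L I : Type} (ts : TransSys S L) (σh : InfoSource ts I) (h : S → I → ℝ≥0∞)

/-- Updating the parent information along a transition `t` (the update of the
progression-based parent source σ_p): the target's pair becomes
`(g(origin)+cost, t)` unless the previously stored g-value is smaller. -/
noncomputable def parUpd (par : S → Option (NNReal × Option (Tran S L))) (t : Tran S L) :
    S → Option (NNReal × Option (Tran S L)) := fun x =>
  if x = t.2.2 then
    match par t.1 with
    | none => par t.2.2
    | some (g, _) =>
      match par t.2.2 with
      | none => some (g + ts.cost t.2.1, some t)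
      | some (g', p') =>
          if g + ts.cost t.2.1 ≤ g' then some (g + ts.cost t.2.1, some t)
          else some (g', p')
  else par x

/-- Processing one successor transition `t = (s, ℓ, s')` during the expansion of
`s`: record the old g-value (undefined iff `s'` unknown), update both information
objects along `t`, add `s'` to the known states, and insert `(s', g(s'), h(s'))`
into the open queue if `h(s') < ∞` and `s'` is new or reached more cheaply
(removing `s'` from closed in the latter case: reopening). -/
noncomputable def procSucc (c : AConfig S L I) (t : Tran S L) : AConfig S L I :=
  let oldg : Option NNReal := if t.2.2 ∈ c.known then some (gOf c t.2.2) else none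
  let par' := parUpd ts c.par t
  let info' := σh.update c.info t
  let c' : AConfig S L I :=
    { known := insert t.2.2 c.known, closed := c.closed, openq := c.openq,
      par := par', info := info' }
  let gnew : NNReal := ((par' t.2.2).map Prod.fst).getD 0
  let hnew : ℝ≥0∞ := h t.2.2 info'
  if hnew = ⊤ then c'
  else
    match oldg with
    | none => { c' with openq := (t.2.2, gnew, hnew) ::ₘ c.openq }
    | some go =>
      if gnew < go then
        { c' with closed := c.closed \ {t.2.2},
                  openq := (t.2.2, gnew, hnew) ::ₘ c.openq }
      else c'

/-- Expanding a state: process all its successor transitions in order. -/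
noncomputable def expandAll (c : AConfig S L I) (l : List (Tran S L)) : AConfig S L I :=
  l.foldl (procSucc ts σh h) c

/-- `l` enumerates (without repetition) exactly the transitions with origin `s`. -/
def SuccList (s : S) (l : List (Tran S L)) : Prop :=
  l.Nodup ∧ ∀ t : Tran S L, t ∈ l ↔ t ∈ ts.trans ∧ t.1 = s

/-- Labels recording what happened in one iteration of dynA*. -/
inductive ALab (S L : Type) where
  | dup (en : Entry S)
  | reev (en : Entry S)
  | expand (en : Entry S)
  | retGoal (en : Entry S) (π : List (Tran S L))
  | unsolv

/-- The entry popped from the open queue in an iteration, if any. -/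
def popped {S L : Type} : ALab S L → Option (Entry S)
  | .dup en => some en
  | .reev en => some en
  | .expand en => some en
  | .retGoal en _ => some en
  | .unsolv => none

/-- The outcome of one iteration of dynA*. -/
inductive AOut (S L I : Type) where
  | cont (c : AConfig S L I)
  | retPath (π : List (Tran S L))
  | unsolvable

/-- One iteration of dynA* (Algorithm 2), with optional re-evaluation.
An entry of minimal f-value is popped; duplicates (closed states) are discarded;
otherwise both information objects are refined on the popped state (σ_p's refine
is the identity, so `par` is unchanged); with `reeval` set, a state whose
heuristic value increased is re-inserted instead of expanded; expanding a goal
state returns the path obtained by following parent pointers; expanding a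
non-goal state processes all its successor transitions. If the open queue is
empty, 'unsolvable' is returned. -/
inductive AStep (reeval : Bool) : AConfig S L I → ALab S L → AOut S L I → Prop
  | dup {c : AConfig S L I} {en : Entry S} {rest : Multiset (Entry S)} :
      c.openq = en ::ₘ rest → (∀ en' ∈ c.openq, fval en ≤ fval en') →
      en.1 ∈ c.closed →
      AStep reeval c (.dup en) (.cont { c with openq := rest })
  | reevFin {c : AConfig S L I} {en : Entry S} {rest : Multiset (Entry S)} :
      c.openq = en ::ₘ rest → (∀ en' ∈ c.openq, fval en ≤ fval en') →
      en.1 ∉ c.closed → reeval = true →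
      en.2.2 < h en.1 (σh.refine c.info en.1) →
      h en.1 (σh.refine c.info en.1) ≠ ⊤ →
      AStep reeval c (.reev en)
        (.cont { c with info := σh.refine c.info en.1,
                        openq := (en.1, gOf c en.1, h en.1 (σh.refine c.info en.1)) ::ₘ rest })
  | reevInf {c : AConfig S L I} {en : Entry S} {rest : Multiset (Entry S)} :
      c.openq = en ::ₘ rest → (∀ en' ∈ c.openq, fval en ≤ fval en') →
      en.1 ∉ c.closed → reeval = true →
      en.2.2 < h en.1 (σh.refine c.info en.1) →
      h en.1 (σh.refine c.info en.1) = ⊤ →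
      AStep reeval c (.reev en)
        (.cont { c with info := σh.refine c.info en.1, openq := rest })
  | retGoal {c : AConfig S L I} {en : Entry S} {rest : Multiset (Entry S)}
      {π : List (Tran S L)} :
      c.openq = en ::ₘ rest → (∀ en' ∈ c.openq, fval en ≤ fval en') →
      en.1 ∉ c.closed →
      ¬(reeval = true ∧ en.2.2 < h en.1 (σh.refine c.info en.1)) →
      en.1 ∈ ts.goal → ParentChain c.par en.1 π →
      AStep reeval c (.retGoal en π) (.retPath π)
  | expand {c : AConfig S L I} {en : Entry S} {rest : Multiset (Entry S)}
      {l : List (Tran S L)} :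
      c.openq = en ::ₘ rest → (∀ en' ∈ c.openq, fval en ≤ fval en') →
      en.1 ∉ c.closed →
      ¬(reeval = true ∧ en.2.2 < h en.1 (σh.refine c.info en.1)) →
      en.1 ∉ ts.goal → SuccList ts en.1 l →
      AStep reeval c (.expand en)
        (.cont (expandAll ts σh h
          { c with openq := rest, closed := insert en.1 c.closed,
                   info := σh.refine c.info en.1 } l))
  | unsolv {c : AConfig S L I} :
      c.openq = 0 → AStep reeval c .unsolv .unsolvable

/-- The initial configuration of dynA*. -/
noncomputable def initAConfig : AConfig S L I where
  known := {ts.init}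
  closed := ∅
  openq :=
    if h ts.init σh.initInfo = ⊤ then 0 else {(ts.init, 0, h ts.init σh.initInfo)}
  par := fun x => if x = ts.init then some (0, none) else none
  info := σh.initInfo

/-- `IsExec ts σh h reeval e lab N`: `e 0, …, e N` are the configurations at the
beginnings of the iterations of an execution of dynA*, with `lab n` recording what
happened in iteration `n`. -/
def IsExec (reeval : Bool) (e : ℕ → AConfig S L I) (lab : ℕ → ALab S L) (N : ℕ) : Prop :=
  e 0 = initAConfig ts σh h ∧
  ∀ n < N, AStep ts σh h reeval (e n) (lab n) (.cont (e (n + 1)))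

/-- A state `s` is settled at iteration `n` if it was expanded in some earlier
iteration at whose beginning its stored g-value was `g*(s)`. -/
def SettledAt (e : ℕ → AConfig S L I) (lab : ℕ → ALab S L) (n : ℕ) (s : S) : Prop :=
  ∃ m < n, ∃ en : Entry S, lab m = .expand en ∧ en.1 = s ∧
    (gOf (e m) s : ℝ≥0∞) = ts.gstar s

/-- Iterated refinement of an information object on a fixed state. -/
def refIter (i : I) (s : S) : ℕ → I
  | 0 => i
  | n + 1 => σh.refine (refIter i s n) s

end DynAStar

/-! ## Auxiliary development for Statement 19 -/

namespace Stmt19Aux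

variable {S L I : Type} {ts : TransSys S L} {σh : InfoSource ts I} {h : S → I → ℝ≥0∞}

lemma pathCost_cons (t : Tran S L) (π : List (Tran S L)) :
    ts.pathCost (t :: π) = ts.cost t.2.1 + ts.pathCost π := by
  simp [TransSys.pathCost]

lemma pathCost_append (π₁ π₂ : List (Tran S L)) :
    ts.pathCost (π₁ ++ π₂) = ts.pathCost π₁ + ts.pathCost π₂ := by
  simp [TransSys.pathCost]

lemma append_single {a b b' : S} {l : L} {π : List (Tran S L)}
    (hp : ts.IsPathFrom a π b) (ht : (b, l, b') ∈ ts.trans) :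
    ts.IsPathFrom a (π ++ [(b, l, b')]) b' := by
  induction hp with
  | nil s => exact TransSys.IsPathFrom.cons ht (TransSys.IsPathFrom.nil _)
  | cons h1 h2 ih => exact TransSys.IsPathFrom.cons h1 (ih ht)

lemma gstar_le_pathCost {s : S} {π : List (Tran S L)} (hp : ts.IsPathFrom ts.init π s) :
    ts.gstar s ≤ (ts.pathCost π : ℝ≥0∞) :=
  sInf_le ⟨π, hp, rfl⟩

lemma gstar_triangle {t : Tran S L} (ht : t ∈ ts.trans) :
    ts.gstar t.2.2 ≤ ts.gstar t.1 + (ts.cost t.2.1 : ℝ≥0∞) := by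
  obtain ⟨a, l, b⟩ := t
  simp only [TransSys.gstar]
  rw [ENNReal.sInf_add]
  refine le_iInf₂ fun x hx => ?_
  obtain ⟨π, hp, rfl⟩ := hx
  calc ts.gstar b ≤ (ts.pathCost (π ++ [(a, l, b)]) : ℝ≥0∞) :=
        gstar_le_pathCost (append_single hp ht)
  _ = (ts.pathCost π : ℝ≥0∞) + (ts.cost l : ℝ≥0∞) := by
        rw [pathCost_append]; push_cast; simp [TransSys.pathCost]

lemma chain (hcons : DynConsistent ts σh h) {i : I} (hi : σh.ReachableInfo i)
    {v u : S} {π : List (Tran S L)} (hp : ts.IsPathFrom v π u) :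
    h v i ≤ (ts.pathCost π : ℝ≥0∞) + h u i := by
  induction hp with
  | nil s => simp [TransSys.pathCost]
  | @cons s m e l π hst hp ih =>
      calc h s i ≤ (ts.cost l : ℝ≥0∞) + h m i := hcons (s, l, m) hst i hi
      _ ≤ (ts.cost l : ℝ≥0∞) + ((ts.pathCost π : ℝ≥0∞) + h e i) := by
            exact add_le_add_right ih _
      _ = (ts.pathCost ((s, l, m) :: π) : ℝ≥0∞) + h e i := by
            rw [pathCost_cons]; push_cast; ring

lemma gOf_eq {c : AConfig S L I} {s : S} {g : NNReal} {p : Option (Tran S L)}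
    (hp : c.par s = some (g, p)) : gOf c s = g := by
  simp [gOf, hp]; rfl

/-- The main invariant of dynA*, with a set `T` of transitions that are
temporarily exempt from the frontier condition (used during expansion). -/
structure Inv (ts : TransSys S L) (σh : InfoSource ts I) (h : S → I → ℝ≥0∞)
    (c : AConfig S L I) (T : Set (Tran S L)) : Prop where
  reach : σh.ReachWith c.info c.known
  init_known : ts.init ∈ c.known
  g0 : ∃ p, c.par ts.init = some (0, p)
  known_par : ∀ s : S, s ∈ c.known ↔ (c.par s).isSome
  lb : ∀ s ∈ c.known, ts.gstar s ≤ (gOf c s : ℝ≥0∞)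
  oe : ∀ en ∈ c.openq, en.1 ∈ c.known ∧ gOf c en.1 ≤ en.2.1 ∧
        en.2.2 ≤ h en.1 c.info ∧ en.2.2 ≠ ⊤
  cl : ∀ s ∈ c.closed, s ∈ c.known ∧ (gOf c s : ℝ≥0∞) = ts.gstar s
  kw : ∀ b ∈ c.known, b ∈ c.closed ∨ (∃ g' h', (b, g', h') ∈ c.openq ∧ g' = gOf c b) ∨
        h b c.info = ⊤
  fr : ∀ t ∈ ts.trans, t ∉ T → t.1 ∈ c.closed →
        (gOf c t.2.2 : ℝ≥0∞) ≤ ts.gstar t.1 + (ts.cost t.2.1 : ℝ≥0∞) ∧ t.2.2 ∈ c.known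

lemma inv_init (ts : TransSys S L) (σh : InfoSource ts I) (h : S → I → ℝ≥0∞) :
    Inv ts σh h (initAConfig ts σh h) (∅ : Set (Tran S L)) := by
  have hgi : gOf (initAConfig ts σh h) ts.init = 0 := by
    simp [gOf, initAConfig]; rfl
  constructor
  · exact InfoSource.ReachWith.base
  · rfl
  · exact ⟨none, by simp [initAConfig]⟩
  · intro s
    simp only [initAConfig, Set.mem_singleton_iff]
    split <;> simp_all
  · intro s hs
    replace hs : s = ts.init := hs
    subst hs
    rw [hgi]
    have h0 : ts.gstar ts.init ≤ (ts.pathCost ([] : List (Tran S L)) : ℝ≥0∞) :=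
      gstar_le_pathCost (TransSys.IsPathFrom.nil _)
    simpa [TransSys.pathCost] using h0
  · intro en hen
    simp only [initAConfig] at hen
    split at hen
    · exact absurd hen (Multiset.notMem_zero _)
    · rw [Multiset.mem_singleton] at hen
      subst hen
      refine ⟨rfl, by rw [hgi], le_refl _, by assumption⟩
  · intro s hs
    exact absurd hs (Set.notMem_empty _)
  · intro b hb
    rw [show (initAConfig ts σh h (I := I)).known = {ts.init} from rfl,
      Set.mem_singleton_iff] at hb
    subst hb
    by_cases htop : h ts.init σh.initInfo = ⊤
    · exact Or.inr (Or.inr htop)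
    · refine Or.inr (Or.inl ⟨0, h ts.init σh.initInfo, ?_, by rw [hgi]⟩)
      simp [initAConfig, htop]
  · intro t _ _ hcl
    exact absurd hcl (Set.notMem_empty _)

lemma walk (hcons : DynConsistent ts σh h)
    {c : AConfig S L I} (inv : Inv ts σh h c ∅) :
    ∀ {v u : S} {π : List (Tran S L)}, ts.IsPathFrom v π u → u ∉ c.closed →
    ∀ B : ℝ≥0∞, v ∈ c.known → (gOf c v : ℝ≥0∞) ≤ B →
    h u c.info = ⊤ ∨ ∃ w g' h', (w, g', h') ∈ c.openq ∧
      (g' : ℝ≥0∞) + h' ≤ B + (ts.pathCost π : ℝ≥0∞) + h u c.info := by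
  have hi : σh.ReachableInfo c.info := ⟨_, inv.reach⟩
  intro v u π hp
  induction hp with
  | nil s =>
      intro hu B hv hB
      rcases inv.kw s hv with hcl | ⟨g', h', hmem, hg⟩ | htop
      · exact absurd hcl hu
      · refine Or.inr ⟨s, g', h', hmem, ?_⟩
        obtain ⟨_, _, hh, _⟩ := inv.oe _ hmem
        have : (g' : ℝ≥0∞) ≤ B := hg ▸ hB
        calc (g' : ℝ≥0∞) + h' ≤ B + h s c.info := add_le_add this hh
        _ ≤ B + (ts.pathCost ([] : List (Tran S L)) : ℝ≥0∞) + h s c.info := by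
              simp [TransSys.pathCost]
      · exact Or.inl htop
  | @cons s m e l π hst hp ih =>
      intro hu B hv hB
      by_cases hcl : s ∈ c.closed
      · obtain ⟨hbound, hmk⟩ := inv.fr (s, l, m) hst (Set.notMem_empty _) hcl
        have hgs : (gOf c s : ℝ≥0∞) = ts.gstar s := (inv.cl s hcl).2
        have hm : (gOf c m : ℝ≥0∞) ≤ B + (ts.cost l : ℝ≥0∞) := by
          calc (gOf c m : ℝ≥0∞) ≤ ts.gstar s + (ts.cost l : ℝ≥0∞) := hbound
          _ ≤ B + (ts.cost l : ℝ≥0∞) := add_le_add_left (hgs ▸ hB) _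
        rcases ih hu (B + (ts.cost l : ℝ≥0∞)) hmk hm with htop | ⟨w, g', h', hmem, hle⟩
        · exact Or.inl htop
        · refine Or.inr ⟨w, g', h', hmem, hle.trans (le_of_eq ?_)⟩
          rw [pathCost_cons]; push_cast; ring
      · rcases inv.kw s hv with hcl' | ⟨g', h', hmem, hg⟩ | htop
        · exact absurd hcl' hcl
        · refine Or.inr ⟨s, g', h', hmem, ?_⟩
          obtain ⟨_, _, hh, _⟩ := inv.oe _ hmem
          have hchain : h s c.info ≤ (ts.pathCost ((s, l, m) :: π) : ℝ≥0∞) + h e c.info :=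
            chain hcons hi (TransSys.IsPathFrom.cons hst hp)
          calc (g' : ℝ≥0∞) + h' ≤ B + ((ts.pathCost ((s, l, m) :: π) : ℝ≥0∞) + h e c.info) :=
                add_le_add (hg ▸ hB) (hh.trans hchain)
          _ = _ := by ring
        · have hchain : h s c.info ≤ (ts.pathCost ((s, l, m) :: π) : ℝ≥0∞) + h e c.info :=
            chain hcons hi (TransSys.IsPathFrom.cons hst hp)
          rw [htop, top_le_iff] at hchain
          rcases ENNReal.add_eq_top.mp hchain with hbad | hgood
          · exact absurd hbad (ENNReal.coe_ne_top)
          · exact Or.inl hgood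

lemma pop_opt (hmono : DynMonotonic ts σh h) (hcons : DynConsistent ts σh h)
    {c : AConfig S L I} (inv : Inv ts σh h c ∅)
    {en : Entry S} {rest : Multiset (Entry S)} (hq : c.openq = en ::ₘ rest)
    (hmin : ∀ en' ∈ c.openq, fval en ≤ fval en')
    (hnc : en.1 ∉ c.closed)
    (hnr : ¬ en.2.2 < h en.1 (σh.refine c.info en.1)) :
    (gOf c en.1 : ℝ≥0∞) = ts.gstar en.1 := by
  have hen : en ∈ c.openq := hq ▸ Multiset.mem_cons_self _ _
  obtain ⟨hk, hgle, _, hht⟩ := inv.oe en hen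
  have hi : σh.ReachableInfo c.info := ⟨_, inv.reach⟩
  have hmr : h en.1 c.info ≤ h en.1 (σh.refine c.info en.1) := (hmono _ hi).2 _ _
  have hcur : h en.1 c.info ≤ en.2.2 := hmr.trans (not_lt.mp hnr)
  have hcurt : h en.1 c.info ≠ ⊤ := ne_top_of_le_ne_top hht hcur
  refine le_antisymm ?_ (inv.lb _ hk)
  by_contra hlt
  replace hlt : ts.gstar en.1 < (gOf c en.1 : ℝ≥0∞) := not_le.mp hlt
  obtain ⟨x, hx, hxlt⟩ := sInf_lt_iff.mp hlt
  obtain ⟨π, hπ, rfl⟩ := hx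
  have hg0 : (gOf c ts.init : ℝ≥0∞) ≤ 0 := by
    obtain ⟨p, hp0⟩ := inv.g0
    rw [gOf_eq hp0]; simp
  rcases walk hcons inv hπ hnc 0 inv.init_known hg0 with htop | ⟨w, g', h', hw, hble⟩
  · exact hcurt htop
  · have h1 : fval en ≤ (g' : ℝ≥0∞) + h' := hmin (w, g', h') hw
    have h2 : (gOf c en.1 : ℝ≥0∞) + h en.1 c.info ≤ fval en :=
      add_le_add (ENNReal.coe_le_coe.mpr hgle) hcur
    have h3 : (g' : ℝ≥0∞) + h' ≤ (ts.pathCost π : ℝ≥0∞) + h en.1 c.info := by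
      simpa using hble
    have h4 : (ts.pathCost π : ℝ≥0∞) + h en.1 c.info <
        (gOf c en.1 : ℝ≥0∞) + h en.1 c.info :=
      ENNReal.add_lt_add_right hcurt hxlt
    exact absurd ((h2.trans h1).trans h3) (not_le.mpr h4)

lemma procSucc_fields (c : AConfig S L I) (t : Tran S L) :
    (procSucc ts σh h c t).known = insert t.2.2 c.known ∧
    (procSucc ts σh h c t).par = parUpd ts c.par t ∧
    (procSucc ts σh h c t).info = σh.update c.info t := by
  unfold procSucc
  by_cases hm : t.2.2 ∈ c.known <;>
    simp only [hm, if_true, if_false, reduceIte] <;>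
    split <;>
    first
      | exact ⟨rfl, rfl, rfl⟩
      | (split <;> exact ⟨rfl, rfl, rfl⟩)

lemma gOf_procSucc (c : AConfig S L I) (t : Tran S L) (s : S) :
    gOf (procSucc ts σh h c t) s = ((parUpd ts c.par t s).map Prod.fst).getD 0 := by
  rw [gOf, (procSucc_fields c t).2.1]

lemma gOf_mk (k cl : Set S) (o : Multiset (Entry S)) (par : S → Option (NNReal × Option (Tran S L))) (i : I) (s : S) :
    gOf (AConfig.mk k cl o par i) s = ((par s).map Prod.fst).getD 0 := rfl

lemma procSucc_branches (c : AConfig S L I) (t : Tran S L) :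
    (h t.2.2 (σh.update c.info t) = ⊤ ∧ (procSucc ts σh h c t).closed = c.closed ∧
       (procSucc ts σh h c t).openq = c.openq) ∨
    (h t.2.2 (σh.update c.info t) ≠ ⊤ ∧ t.2.2 ∉ c.known ∧
       (procSucc ts σh h c t).closed = c.closed ∧
       (procSucc ts σh h c t).openq =
         (t.2.2, gOf (procSucc ts σh h c t) t.2.2, h t.2.2 (σh.update c.info t)) ::ₘ c.openq) ∨
    (h t.2.2 (σh.update c.info t) ≠ ⊤ ∧ t.2.2 ∈ c.known ∧
       gOf (procSucc ts σh h c t) t.2.2 < gOf c t.2.2 ∧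
       (procSucc ts σh h c t).closed = c.closed \ {t.2.2} ∧
       (procSucc ts σh h c t).openq =
         (t.2.2, gOf (procSucc ts σh h c t) t.2.2, h t.2.2 (σh.update c.info t)) ::ₘ c.openq) ∨
    (h t.2.2 (σh.update c.info t) ≠ ⊤ ∧ t.2.2 ∈ c.known ∧
       ¬ gOf (procSucc ts σh h c t) t.2.2 < gOf c t.2.2 ∧
       (procSucc ts σh h c t).closed = c.closed ∧
       (procSucc ts σh h c t).openq = c.openq) := by
  by_cases h1 : h t.2.2 (σh.update c.info t) = ⊤
  · refine Or.inl ⟨h1, ?_, ?_⟩ <;> simp [procSucc, h1]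
  · by_cases hm : t.2.2 ∈ c.known
    · by_cases h2 : ((parUpd ts c.par t t.2.2).map Prod.fst).getD 0 < gOf c t.2.2
      · refine Or.inr (Or.inr (Or.inl ⟨h1, hm, ?_, ?_, ?_⟩)) <;>
          simp [procSucc, gOf_mk, h1, hm, h2]
      · refine Or.inr (Or.inr (Or.inr ⟨h1, hm, ?_, ?_, ?_⟩)) <;>
          simp [procSucc, gOf_mk, h1, hm, h2]
    · refine Or.inr (Or.inl ⟨h1, hm, ?_, ?_⟩) <;>
        (simp only [procSucc, h1, hm, ↓reduceIte] <;> rfl)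

lemma procSucc_inv (hmono : DynMonotonic ts σh h) {c : AConfig S L I} {T : Set (Tran S L)}
    {t : Tran S L} (inv : Inv ts σh h c T) (ht : t ∈ ts.trans) (hcl1 : t.1 ∈ c.closed) :
    Inv ts σh h (procSucc ts σh h c t) (T \ {t}) ∧ (procSucc ts σh h c t).closed = c.closed := by
  obtain ⟨hfk, hfp, hfi⟩ := procSucc_fields (ts := ts) (σh := σh) (h := h) c t
  set c₂ := procSucc ts σh h c t with hc₂
  obtain ⟨hk1, hg1star⟩ := inv.cl t.1 hcl1
  have hi : σh.ReachableInfo c.info := ⟨_, inv.reach⟩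
  have hupd : ∀ s, h s c.info ≤ h s (σh.update c.info t) := fun s => (hmono _ hi).1 s t ht
  obtain ⟨⟨g1, p1⟩, h1⟩ : ∃ gp, c.par t.1 = some gp :=
    Option.isSome_iff_exists.mp ((inv.known_par t.1).mp hk1)
  have hg1 : gOf c t.1 = g1 := gOf_eq h1
  have hg1' : (g1 : ℝ≥0∞) = ts.gstar t.1 := by rw [← hg1]; exact hg1star
  have hpar2 : ∀ x, x ≠ t.2.2 → c₂.par x = c.par x := fun x hx => by
    rw [hfp]; exact if_neg hx
  have hg2u : ∀ x, x ≠ t.2.2 → gOf c₂ x = gOf c x := fun x hx => by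
    rw [gOf, hpar2 x hx]; rfl
  have key : (∃ p, c₂.par t.2.2 = some (g1 + ts.cost t.2.1, p) ∧
        ((c.par t.2.2).isSome → g1 + ts.cost t.2.1 ≤ gOf c t.2.2)) ∨
      (∃ gp, c.par t.2.2 = some gp ∧ c₂.par t.2.2 = some gp ∧ gp.1 < g1 + ts.cost t.2.1) := by
    rw [hfp]
    cases h0 : c.par t.2.2 with
    | none =>
        exact Or.inl ⟨some t, by simp [parUpd, h1, h0], fun hs => by simp [h0] at hs⟩
    | some gp =>
        obtain ⟨g0, p0⟩ := gp
        by_cases hle : g1 + ts.cost t.2.1 ≤ g0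
        · exact Or.inl ⟨some t, by simp [parUpd, h1, h0, hle],
            fun _ => by rw [gOf_eq h0]; exact hle⟩
        · exact Or.inr ⟨(g0, p0), rfl, by simp [parUpd, h1, h0, hle], not_le.mp hle⟩
  have hsome2 : (c₂.par t.2.2).isSome := by
    rcases key with ⟨p, hp, _⟩ | ⟨gp, _, hp, _⟩ <;> simp [hp]
  have F1 : gOf c₂ t.2.2 ≤ g1 + ts.cost t.2.1 := by
    rcases key with ⟨p, hp, _⟩ | ⟨⟨g0, p0⟩, h0, hp, hlt⟩
    · rw [gOf_eq hp]
    · rw [gOf_eq hp]; exact le_of_lt hlt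
  have F2 : t.2.2 ∈ c.known → gOf c₂ t.2.2 ≤ gOf c t.2.2 := by
    intro hm
    rcases key with ⟨p, hp, himp⟩ | ⟨⟨g0, p0⟩, h0, hp, _⟩
    · rw [gOf_eq hp]; exact himp ((inv.known_par _).mp hm)
    · rw [gOf_eq hp, gOf_eq h0]
  have F3 : ts.gstar t.2.2 ≤ (gOf c₂ t.2.2 : ℝ≥0∞) := by
    rcases key with ⟨p, hp, _⟩ | ⟨⟨g0, p0⟩, h0, hp, _⟩
    · rw [gOf_eq hp]
      calc ts.gstar t.2.2 ≤ ts.gstar t.1 + (ts.cost t.2.1 : ℝ≥0∞) := gstar_triangle ht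
      _ = ((g1 + ts.cost t.2.1 : NNReal) : ℝ≥0∞) := by rw [← hg1']; push_cast; ring
    · rw [gOf_eq hp, ← gOf_eq h0]
      exact inv.lb _ ((inv.known_par _).mpr (by rw [h0]; rfl))
  have F4 : t.2.2 ∈ c.closed → gOf c₂ t.2.2 = gOf c t.2.2 := by
    intro hcb
    refine le_antisymm (F2 (inv.cl _ hcb).1) (ENNReal.coe_le_coe.mp ?_)
    rw [(inv.cl _ hcb).2]; exact F3
  have hCL : c₂.closed = c.closed := by
    rcases procSucc_branches (ts := ts) (σh := σh) (h := h) c t with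
      ⟨_, hcl, _⟩ | ⟨_, _, hcl, _⟩ | ⟨_, hm, hlt, hcl, _⟩ | ⟨_, _, _, hcl, _⟩
    · exact hcl
    · exact hcl
    · rw [hcl]
      refine Set.diff_singleton_eq_self fun hcb => ?_
      rw [F4 hcb] at hlt
      exact lt_irrefl _ hlt
    · exact hcl
  have hOQ : c₂.openq = c.openq ∨
      (c₂.openq = (t.2.2, gOf c₂ t.2.2, h t.2.2 (σh.update c.info t)) ::ₘ c.openq ∧
        h t.2.2 (σh.update c.info t) ≠ ⊤) := by
    rcases procSucc_branches (ts := ts) (σh := σh) (h := h) c t with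
      ⟨_, _, hoq⟩ | ⟨hnt, _, _, hoq⟩ | ⟨hnt, _, _, _, hoq⟩ | ⟨_, _, _, _, hoq⟩
    · exact Or.inl hoq
    · exact Or.inr ⟨hoq, hnt⟩
    · exact Or.inr ⟨hoq, hnt⟩
    · exact Or.inl hoq
  have htop2 : ∀ b, h b c.info = ⊤ → h b c₂.info = ⊤ := fun b htop => by
    rw [hfi]; exact eq_top_iff.mpr (htop ▸ hupd b)
  have hoe_old : ∀ en' ∈ c.openq, en'.1 ∈ c₂.known ∧ gOf c₂ en'.1 ≤ en'.2.1 ∧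
      en'.2.2 ≤ h en'.1 c₂.info ∧ en'.2.2 ≠ ⊤ := by
    intro en' hen'
    obtain ⟨hk', hg', hh', hnt'⟩ := inv.oe en' hen'
    refine ⟨by rw [hfk]; exact Set.mem_insert_of_mem _ hk', ?_,
      by rw [hfi]; exact hh'.trans (hupd _), hnt'⟩
    by_cases hx : en'.1 = t.2.2
    · rw [hx]; exact (F2 (hx ▸ hk')).trans (hx ▸ hg')
    · rw [hg2u _ hx]; exact hg'
  have hKWb : t.2.2 ∈ c₂.closed ∨
      (∃ g' h', (t.2.2, g', h') ∈ c₂.openq ∧ g' = gOf c₂ t.2.2) ∨ h t.2.2 c₂.info = ⊤ := by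
    rcases procSucc_branches (ts := ts) (σh := σh) (h := h) c t with
      ⟨hnt, _, _⟩ | ⟨hnt, _, _, hoq⟩ | ⟨hnt, _, _, _, hoq⟩ | ⟨hnt, hm, hnlt, _, hoq⟩
    · exact Or.inr (Or.inr (by rw [hfi]; exact hnt))
    · exact Or.inr (Or.inl ⟨_, _, by rw [hoq]; exact Multiset.mem_cons_self _ _, rfl⟩)
    · exact Or.inr (Or.inl ⟨_, _, by rw [hoq]; exact Multiset.mem_cons_self _ _, rfl⟩)
    · have hEq : gOf c₂ t.2.2 = gOf c t.2.2 := le_antisymm (F2 hm) (not_lt.mp hnlt)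
      rcases inv.kw _ hm with hcb | ⟨g', h', hm', he'⟩ | htop
      · exact Or.inl (hCL ▸ hcb)
      · exact Or.inr (Or.inl ⟨g', h', by rw [hoq]; exact hm', by rw [hEq]; exact he'⟩)
      · exact Or.inr (Or.inr (htop2 _ htop))
  refine ⟨⟨?_, ?_, ?_, ?_, ?_, ?_, ?_, ?_, ?_⟩, hCL⟩
  · rw [hfk, hfi]; exact InfoSource.ReachWith.update inv.reach ht hk1
  · rw [hfk]; exact Set.mem_insert_of_mem _ inv.init_known
  · obtain ⟨p, hp0⟩ := inv.g0
    by_cases hx : ts.init = t.2.2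
    · rw [← hx] at key
      rcases key with ⟨p', hp', himp⟩ | ⟨gp, h0, hp', _⟩
      · have h00 : g1 + ts.cost t.2.1 = 0 := by
          have := himp (by rw [hp0]; rfl)
          rw [gOf_eq hp0] at this
          exact le_antisymm this zero_le
        exact ⟨p', by rw [hp', h00]⟩
      · rw [hp0] at h0
        exact ⟨p, by rw [hp', ← h0]⟩
    · exact ⟨p, by rw [hpar2 _ hx, hp0]⟩
  · intro s
    by_cases hx : s = t.2.2
    · subst hx
      exact iff_of_true (by rw [hfk]; exact Set.mem_insert _ _) hsome2
    · rw [hfk, hpar2 _ hx]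
      simp only [Set.mem_insert_iff, hx, false_or]
      exact inv.known_par s
  · intro s hs
    by_cases hx : s = t.2.2
    · subst hx; exact F3
    · rw [hg2u _ hx]
      rw [hfk] at hs
      exact inv.lb s (hs.resolve_left hx)
  · intro en' hen'
    rcases hOQ with hoq | ⟨hoq, hnt⟩
    · exact hoe_old en' (hoq ▸ hen')
    · rw [hoq] at hen'
      rcases Multiset.mem_cons.mp hen' with rfl | hen''
      · exact ⟨by rw [hfk]; exact Set.mem_insert _ _, le_refl _,
          by rw [hfi], by rw [hfi] at *; exact hnt⟩
      · exact hoe_old en' hen''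
  · intro s hs
    rw [hCL] at hs
    obtain ⟨hks, hgs⟩ := inv.cl s hs
    refine ⟨by rw [hfk]; exact Set.mem_insert_of_mem _ hks, ?_⟩
    by_cases hx : s = t.2.2
    · subst hx; rw [F4 hs]; exact hgs
    · rw [hg2u _ hx]; exact hgs
  · intro b hb
    by_cases hx : b = t.2.2
    · subst hx; exact hKWb
    · rw [hfk] at hb
      rcases inv.kw b (hb.resolve_left hx) with hcb | ⟨g', h', hm', he'⟩ | htop
      · exact Or.inl (hCL ▸ hcb)
      · refine Or.inr (Or.inl ⟨g', h', ?_, by rw [hg2u _ hx]; exact he'⟩)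
        rcases hOQ with hoq | ⟨hoq, _⟩
        · rw [hoq]; exact hm'
        · rw [hoq]; exact Multiset.mem_cons_of_mem hm'
      · exact Or.inr (Or.inr (htop2 _ htop))
  · intro t' ht' hnT hcl'
    rw [hCL] at hcl'
    by_cases hteq : t' = t
    · subst hteq
      refine ⟨?_, by rw [hfk]; exact Set.mem_insert _ _⟩
      calc (gOf c₂ t'.2.2 : ℝ≥0∞) ≤ ((g1 + ts.cost t'.2.1 : NNReal) : ℝ≥0∞) :=
            ENNReal.coe_le_coe.mpr F1
      _ = ts.gstar t'.1 + (ts.cost t'.2.1 : ℝ≥0∞) := by rw [← hg1']; push_cast; ring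
    · have hnT' : t' ∉ T := fun hT => hnT ⟨hT, hteq⟩
      obtain ⟨hbnd, hkn⟩ := inv.fr t' ht' hnT' hcl'
      refine ⟨?_, by rw [hfk]; exact Set.mem_insert_of_mem _ hkn⟩
      by_cases hx : t'.2.2 = t.2.2
      · rw [hx]
        exact (ENNReal.coe_le_coe.mpr (F2 (hx ▸ hkn))).trans (hx ▸ hbnd)
      · rw [hg2u _ hx]; exact hbnd

lemma fold_inv (hmono : DynMonotonic ts σh h) :
    ∀ (l : List (Tran S L)) (c : AConfig S L I) (T : Set (Tran S L)),
    Inv ts σh h c T → (∀ t ∈ l, t ∈ ts.trans ∧ t.1 ∈ c.closed) → (∀ t ∈ T, t ∈ l) →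
    Inv ts σh h (expandAll ts σh h c l) ∅
  | [], c, T, inv, _, hT => by
      refine ⟨inv.reach, inv.init_known, inv.g0, inv.known_par, inv.lb, inv.oe, inv.cl,
        inv.kw, ?_⟩
      intro t ht _ hcl
      exact inv.fr t ht (fun hmem => (List.not_mem_nil (hT t hmem))) hcl
  | t :: l', c, T, inv, hl, hT => by
      obtain ⟨inv₂, hcl₂⟩ := procSucc_inv hmono inv (hl t List.mem_cons_self).1
        (hl t List.mem_cons_self).2
      have heq : expandAll ts σh h c (t :: l') = expandAll ts σh h (procSucc ts σh h c t) l' :=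
        rfl
      rw [heq]
      refine fold_inv hmono l' _ (T \ {t}) inv₂ ?_ ?_
      · intro t' ht'
        refine ⟨(hl t' (List.mem_cons_of_mem _ ht')).1, ?_⟩
        rw [hcl₂]
        exact (hl t' (List.mem_cons_of_mem _ ht')).2
      · rintro t' ⟨hT', hne⟩
        rcases List.mem_cons.mp (hT t' hT') with rfl | hmem
        · exact absurd rfl hne
        · exact hmem

lemma step_inv (hmono : DynMonotonic ts σh h) (hcons : DynConsistent ts σh h)
    {c c' : AConfig S L I} {lb : ALab S L} (inv : Inv ts σh h c ∅)
    (hst : AStep ts σh h true c lb (.cont c')) : Inv ts σh h c' ∅ := by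
  have hi : σh.ReachableInfo c.info := ⟨_, inv.reach⟩
  cases hst with
  | @dup en rest hq hmin hcl =>
      refine ⟨inv.reach, inv.init_known, inv.g0, inv.known_par, inv.lb, ?_, inv.cl, ?_, inv.fr⟩
      · intro en' hen'
        exact inv.oe en' (by rw [hq]; exact Multiset.mem_cons_of_mem hen')
      · intro b hb
        rcases inv.kw b hb with hbc | ⟨g', h', hm', he'⟩ | htop
        · exact Or.inl hbc
        · rcases Multiset.mem_cons.mp (hq ▸ hm') with heq | hr
          · exact Or.inl (by rw [show b = en.1 from congrArg Prod.fst heq]; exact hcl)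
          · exact Or.inr (Or.inl ⟨g', h', hr, he'⟩)
        · exact Or.inr (Or.inr htop)
  | @reevFin en rest hq hmin hncl hre hlt hnt =>
      have hen : en ∈ c.openq := hq ▸ Multiset.mem_cons_self _ _
      have hk : en.1 ∈ c.known := (inv.oe en hen).1
      have href : ∀ s, h s c.info ≤ h s (σh.refine c.info en.1) := fun s => (hmono _ hi).2 s en.1
      refine ⟨InfoSource.ReachWith.refine inv.reach hk, inv.init_known, inv.g0,
        inv.known_par, inv.lb, ?_, inv.cl, ?_, inv.fr⟩
      · intro en' hen'
        rcases Multiset.mem_cons.mp hen' with rfl | hr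
        · exact ⟨hk, le_refl _, le_refl _, hnt⟩
        · obtain ⟨h1, h2, h3, h4⟩ := inv.oe en' (by rw [hq]; exact Multiset.mem_cons_of_mem hr)
          exact ⟨h1, h2, h3.trans (href _), h4⟩
      · intro b hb
        rcases inv.kw b hb with hbc | ⟨g', h', hm', he'⟩ | htop
        · exact Or.inl hbc
        · rcases Multiset.mem_cons.mp (hq ▸ hm') with heq | hr
          · have hb' : b = en.1 := congrArg Prod.fst heq
            subst hb'
            exact Or.inr (Or.inl ⟨gOf c en.1, h en.1 (σh.refine c.info en.1),
              Multiset.mem_cons_self _ _, rfl⟩)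
          · exact Or.inr (Or.inl ⟨g', h', Multiset.mem_cons_of_mem hr, he'⟩)
        · exact Or.inr (Or.inr (eq_top_iff.mpr (htop ▸ href b)))
  | @reevInf en rest hq hmin hncl hre hlt htop =>
      have hen : en ∈ c.openq := hq ▸ Multiset.mem_cons_self _ _
      have hk : en.1 ∈ c.known := (inv.oe en hen).1
      have href : ∀ s, h s c.info ≤ h s (σh.refine c.info en.1) := fun s => (hmono _ hi).2 s en.1
      refine ⟨InfoSource.ReachWith.refine inv.reach hk, inv.init_known, inv.g0,
        inv.known_par, inv.lb, ?_, inv.cl, ?_, inv.fr⟩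
      · intro en' hen'
        obtain ⟨h1, h2, h3, h4⟩ := inv.oe en' (by rw [hq]; exact Multiset.mem_cons_of_mem hen')
        exact ⟨h1, h2, h3.trans (href _), h4⟩
      · intro b hb
        rcases inv.kw b hb with hbc | ⟨g', h', hm', he'⟩ | htop'
        · exact Or.inl hbc
        · rcases Multiset.mem_cons.mp (hq ▸ hm') with heq | hr
          · exact Or.inr (Or.inr (by rw [show b = en.1 from congrArg Prod.fst heq]; exact htop))
          · exact Or.inr (Or.inl ⟨g', h', hr, he'⟩)
        · exact Or.inr (Or.inr (eq_top_iff.mpr (htop' ▸ href b)))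
  | @expand en rest l hq hmin hncl hnr hng hsl =>
      have hen : en ∈ c.openq := hq ▸ Multiset.mem_cons_self _ _
      have hk : en.1 ∈ c.known := (inv.oe en hen).1
      have href : ∀ s, h s c.info ≤ h s (σh.refine c.info en.1) := fun s => (hmono _ hi).2 s en.1
      have hopt : (gOf c en.1 : ℝ≥0∞) = ts.gstar en.1 :=
        pop_opt hmono hcons inv hq hmin hncl (fun hlt => hnr ⟨rfl, hlt⟩)
      have inv₁ : Inv ts σh h
          { c with openq := rest, closed := insert en.1 c.closed,
                   info := σh.refine c.info en.1 } {t' | t' ∈ l} := by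
        refine ⟨InfoSource.ReachWith.refine inv.reach hk, inv.init_known, inv.g0,
          inv.known_par, inv.lb, ?_, ?_, ?_, ?_⟩
        · intro en' hen'
          obtain ⟨h1, h2, h3, h4⟩ := inv.oe en' (by rw [hq]; exact Multiset.mem_cons_of_mem hen')
          exact ⟨h1, h2, h3.trans (href _), h4⟩
        · intro s hs
          rcases Set.mem_insert_iff.mp hs with rfl | hs'
          · exact ⟨hk, hopt⟩
          · exact inv.cl s hs'
        · intro b hb
          rcases inv.kw b hb with hbc | ⟨g', h', hm', he'⟩ | htop
          · exact Or.inl (Set.mem_insert_of_mem _ hbc)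
          · rcases Multiset.mem_cons.mp (hq ▸ hm') with heq | hr
            · refine Or.inl ?_
              rw [show b = en.1 from congrArg Prod.fst heq]
              exact Set.mem_insert _ _
            · exact Or.inr (Or.inl ⟨g', h', hr, he'⟩)
          · exact Or.inr (Or.inr (eq_top_iff.mpr (htop ▸ href b)))
        · intro t' ht' hnl hcl'
          rcases Set.mem_insert_iff.mp hcl' with heq1 | hcl''
          · exact absurd ((hsl.2 t').mpr ⟨ht', heq1⟩) hnl
          · exact inv.fr t' ht' (Set.notMem_empty _) hcl''
      refine fold_inv hmono l _ {t' | t' ∈ l} inv₁ ?_ (fun t' ht' => ht')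
      intro t' ht'
      refine ⟨((hsl.2 t').mp ht').1, ?_⟩
      rw [((hsl.2 t').mp ht').2]
      exact Set.mem_insert _ _

end Stmt19Aux

/-! ## Statement 19 -/


theorem stmt19 {S L I : Type} [Fintype S] [Fintype L]
    (ts : TransSys S L) (σh : InfoSource ts I) (h : S → I → ℝ≥0∞)
    (hmono : DynMonotonic ts σh h) (hcons : DynConsistent ts σh h)
    (e : ℕ → AConfig S L I) (lab : ℕ → ALab S L) (N : ℕ)
    (hexec : IsExec ts σh h true e lab N)
    (n : ℕ) (hn : n ≤ N) (l : ALab S L) (o : AOut S L I)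
    (hstep : AStep ts σh h true (e n) l o)
    (en : Entry S)
    (hexp : l = ALab.expand en ∨ ∃ π, l = ALab.retGoal en π) :
    (gOf (e n) en.1 : ℝ≥0∞) = ts.gstar en.1 := by
  have hinv : ∀ m, m ≤ N → Stmt19Aux.Inv ts σh h (e m) ∅ := by
    intro m
    induction m with
    | zero => intro _; rw [hexec.1]; exact Stmt19Aux.inv_init ts σh h
    | succ k ih =>
        intro hk
        exact Stmt19Aux.step_inv hmono hcons (ih (Nat.le_of_succ_le hk))
          (hexec.2 k (Nat.lt_of_succ_le hk))
  have inv := hinv n hn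
  rcases hexp with rfl | ⟨π, rfl⟩
  · cases hstep with
    | expand hq hmin hncl hnr hng hsl =>
        exact Stmt19Aux.pop_opt hmono hcons inv hq hmin hncl (fun hlt => hnr ⟨rfl, hlt⟩)
  · cases hstep with
    | retGoal hq hmin hncl hnr hgl hpc =>
        exact Stmt19Aux.pop_opt hmono hcons inv hq hmin hncl (fun hlt => hnr ⟨rfl, hlt⟩)
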